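/- For every finite CGS (or ATS), coalition A and ATL state formula φ: ⟦⟨A⟩GF φ⟧ = ν y. μ x. (CPre(A, x) ∪ (⟦φ⟧ ∩ CPre(A, y))) and ⟦⟨A⟩FG φ⟧ = μ y. ν x. (CPre(A, x) ∩ (⟦φ⟧ ∪ CPre(A, y))), where μ and ν denote the least and greatest fixpoints of the corresponding monotone maps on subsets of Loc. -/
import Mathlib


/-!  Core formalization of concurrent game structures (CGS), alternating
transition systems (ATS), and the logic ATL, following Alur-Henzinger-Kupferman
and Laroussinie-Markey-Oreiby, "On the Expressiveness and Complexity of ATL".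

A generic "game structure" `GS Agt Loc P M` has locations labelled by atomic
propositions from `P`, and in each location each agent has a set of available
moves (of type `M`); a joint move (one move per agent) leads to a set of
possible successor locations (a singleton for CGSs, the intersection of the
chosen sets for ATSs). -/

structure GS (Agt Loc P M : Type) where
  lab : Loc → Set P
  mov : Loc → Agt → Set M
  step : Loc → (Agt → M) → Set Loc

namespace GS

variable {Agt Loc P M : Type}

/-- a complete joint move, valid at `ℓ`. -/
def ValidMove (S : GS Agt Loc P M) (ℓ : Loc) (m : Agt → M) : Prop :=
  ∀ a, m a ∈ S.mov ℓ a

/-- `Next ℓ A mA`: locations reachable from `ℓ` when each member `a` of the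
coalition `A` plays `mA a` (and the other agents play arbitrary valid moves). -/
def Next (S : GS Agt Loc P M) (ℓ : Loc) (A : Set Agt) (mA : Agt → M) : Set Loc :=
  {ℓ' | ∃ m, S.ValidMove ℓ m ∧ (∀ a ∈ A, m a = mA a) ∧ ℓ' ∈ S.step ℓ m}

/-- all possible successors of `ℓ`. -/
def NextAll (S : GS Agt Loc P M) (ℓ : Loc) : Set Loc :=
  {ℓ' | ∃ m, S.ValidMove ℓ m ∧ ℓ' ∈ S.step ℓ m}

/-- the controllable predecessors: `ℓ ∈ CPre A T` iff coalition `A` has a move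
forcing the next location to be in `T`. -/
def CPre (S : GS Agt Loc P M) (A : Set Agt) (T : Set Loc) : Set Loc :=
  {ℓ | ∃ mA : Agt → M, (∀ a ∈ A, mA a ∈ S.mov ℓ a) ∧ S.Next ℓ A mA ⊆ T}

theorem cpre_mono (S : GS Agt Loc P M) (A : Set Agt) : Monotone (S.CPre A) := by
  intro T T' h ℓ hℓ
  obtain ⟨mA, hv, hn⟩ := hℓ
  exact ⟨mA, hv, hn.trans h⟩

/-- A strategy maps the (strict) past history and current location to a move
for each agent (only the moves of the coalition members are relevant). -/
def Strat (Agt Loc M : Type) : Type := List Loc → Loc → Agt → M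

def StratValid (S : GS Agt Loc P M) (A : Set Agt) (F : Strat Agt Loc M) : Prop :=
  ∀ h ℓ a, a ∈ A → F h ℓ a ∈ S.mov ℓ a

/-- a strategy is memoryless (state-based) if it only depends on the current
location. -/
def Memoryless (F : Strat Agt Loc M) : Prop :=
  ∀ h h' ℓ a, F h ℓ a = F h' ℓ a

/-- the history `ρ 0, …, ρ (i-1)`. -/
def hist (ρ : ℕ → Loc) (i : ℕ) : List Loc := List.ofFn (fun j : Fin i => ρ j)

/-- computations from `ℓ`. -/
def Comp (S : GS Agt Loc P M) (ℓ : Loc) (ρ : ℕ → Loc) : Prop :=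
  ρ 0 = ℓ ∧ ∀ i, ρ (i + 1) ∈ S.NextAll (ρ i)

/-- the outcomes of a strategy `F` of coalition `A` from `ℓ`. -/
def Out (S : GS Agt Loc P M) (A : Set Agt) (ℓ : Loc) (F : Strat Agt Loc M)
    (ρ : ℕ → Loc) : Prop :=
  ρ 0 = ℓ ∧ ∀ i, ρ (i + 1) ∈ S.Next (ρ i) A (F (hist ρ i) (ρ i))

end GS

/-! ### ATL syntax and semantics -/

mutual
  /-- ATL state formulas. -/
  inductive SForm (Agt P : Type) : Type where
    | tru : SForm Agt P
    | atom : P → SForm Agt P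
    | snot : SForm Agt P → SForm Agt P
    | sor : SForm Agt P → SForm Agt P → SForm Agt P
    | coal : Set Agt → PForm Agt P → SForm Agt P
  /-- ATL path formulas. -/
  inductive PForm (Agt P : Type) : Type where
    | pnot : PForm Agt P → PForm Agt P
    | nxt : SForm Agt P → PForm Agt P
    | untl : SForm Agt P → SForm Agt P → PForm Agt P
end

mutual
  /-- satisfaction of an ATL state formula at a location. -/
  def SSat {Agt Loc P M : Type} (S : GS Agt Loc P M) : SForm Agt P → Loc → Prop
    | .tru, _ => True
    | .atom p, ℓ => p ∈ S.lab ℓ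
    | .snot φ, ℓ => ¬ SSat S φ ℓ
    | .sor φ ψ, ℓ => SSat S φ ℓ ∨ SSat S ψ ℓ
    | .coal A φ, ℓ =>
        ∃ F : GS.Strat Agt Loc M, S.StratValid A F ∧
          ∀ ρ : ℕ → Loc, S.Out A ℓ F ρ → PSat S φ ρ
  /-- satisfaction of an ATL path formula along a sequence of locations. -/
  def PSat {Agt Loc P M : Type} (S : GS Agt Loc P M) : PForm Agt P → (ℕ → Loc) → Prop
    | .pnot φ, ρ => ¬ PSat S φ ρ
    | .nxt φ, ρ => SSat S φ (ρ 1)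
    | .untl φ ψ, ρ => ∃ i, SSat S ψ (ρ i) ∧ ∀ j < i, SSat S φ (ρ j)
end

/-- the release modality:  `φ R ψ := ¬((¬φ) U (¬ψ))`. -/
def PForm.rel {Agt P : Type} (φ ψ : SForm Agt P) : PForm Agt P :=
  .pnot (.untl φ.snot ψ.snot)

/-- the weak-until modality:  `φ W ψ := ψ R (φ ∨ ψ)`. -/
def PForm.wuntl {Agt P : Type} (φ ψ : SForm Agt P) : PForm Agt P :=
  PForm.rel ψ (φ.sor ψ)

/-- conjunction of state formulas. -/
def SForm.sand {Agt P : Type} (φ ψ : SForm Agt P) : SForm Agt P :=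
  .snot (.sor φ.snot ψ.snot)

/-- the set of locations satisfying a state formula. -/
def SatSet {Agt Loc P M : Type} (S : GS Agt Loc P M) (φ : SForm Agt P) : Set Loc :=
  {ℓ | SSat S φ ℓ}

/-! ### Concurrent game structures (explicit) and alternating transition systems -/

/-- an (explicit) concurrent game structure: moves are natural numbers, and the
transition table gives the successor of each joint move. -/
structure CGS (Agt Loc P : Type) where
  lab : Loc → Set P
  chc : Loc → Agt → Finset ℕ
  edg : Loc → (Agt → ℕ) → Loc

namespace CGS

variable {Agt Loc P : Type}

def WellFormed (G : CGS Agt Loc P) : Prop := ∀ ℓ a, (G.chc ℓ a).Nonempty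

def toGS (G : CGS Agt Loc P) : GS Agt Loc P ℕ where
  lab := G.lab
  mov ℓ a := ↑(G.chc ℓ a)
  step ℓ m := {G.edg ℓ m}

/-- a CGS is turn-based if in every location at most one agent has more than
one available move. -/
def TurnBased (G : CGS Agt Loc P) : Prop :=
  ∀ ℓ (a b : Agt), 1 < (G.chc ℓ a).card → 1 < (G.chc ℓ b).card → a = b

end CGS

/-- an alternating transition system: a move of an agent is a set of locations;
a joint move leads to the intersection of the chosen sets (a singleton when the
ATS is well-formed). -/
structure ATS (Agt Loc P : Type) where
  lab : Loc → Set P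
  chc : Loc → Agt → Set (Set Loc)

namespace ATS

variable {Agt Loc P : Type}

/-- well-formedness: each agent always has some available move, and each joint
choice of moves intersects in a singleton. -/
def WellFormed (T : ATS Agt Loc P) : Prop :=
  (∀ ℓ a, (T.chc ℓ a).Nonempty) ∧
  ∀ ℓ (Q : Agt → Set Loc), (∀ a, Q a ∈ T.chc ℓ a) → ∃ ℓ', (⋂ a, Q a) = {ℓ'}

def toGS (T : ATS Agt Loc P) : GS Agt Loc P (Set Loc) where
  lab := T.lab
  mov := T.chc
  step _ Q := ⋂ a, Q a

end ATS

/-! ### The EATL modalities `⟨A⟩GF` and `⟨A⟩FG` (semantics) -/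

/-- `ℓ ∈ SatGF S A φ` iff coalition `A` has a strategy all of whose outcomes
from `ℓ` satisfy `φ` at infinitely many positions. -/
def GS.SatGF {Agt Loc P M : Type} (S : GS Agt Loc P M) (A : Set Agt)
    (φ : SForm Agt P) : Set Loc :=
  {ℓ | ∃ F : GS.Strat Agt Loc M, S.StratValid A F ∧
    ∀ ρ : ℕ → Loc, S.Out A ℓ F ρ → ∀ N, ∃ i, N ≤ i ∧ SSat S φ (ρ i)}

/-- `ℓ ∈ SatFG S A φ` iff coalition `A` has a strategy all of whose outcomes
from `ℓ` satisfy `φ` at all but finitely many positions. -/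
def GS.SatFG {Agt Loc P M : Type} (S : GS Agt Loc P M) (A : Set Agt)
    (φ : SForm Agt P) : Set Loc :=
  {ℓ | ∃ F : GS.Strat Agt Loc M, S.StratValid A F ∧
    ∀ ρ : ℕ → Loc, S.Out A ℓ F ρ → ∃ N, ∀ i, N ≤ i → SSat S φ (ρ i)}

/-! ### Statement 8

`⟦⟨A⟩GF φ⟧ = ν y. μ x. (CPre(A,x) ∪ (⟦φ⟧ ∩ CPre(A,y)))` and
`⟦⟨A⟩FG φ⟧ = μ y. ν x. (CPre(A,x) ∩ (⟦φ⟧ ∪ CPre(A,y)))`, both on CGSs and on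
ATSs. -/

section FixpointDefs

variable {Agt Loc P M : Type}

/-- the inner map `x ↦ CPre(A,x) ∪ (⟦φ⟧ ∩ CPre(A,y))`, as a monotone map. -/
def innerGF (S : GS Agt Loc P M) (A : Set Agt) (φ : SForm Agt P) (y : Set Loc) :
    Set Loc →o Set Loc :=
  ⟨fun x => S.CPre A x ∪ (SatSet S φ ∩ S.CPre A y),
   fun _ _ h => Set.union_subset_union (S.cpre_mono A h) (le_refl _)⟩

/-- the outer map `y ↦ μ x. (CPre(A,x) ∪ (⟦φ⟧ ∩ CPre(A,y)))`. -/
def outerGF (S : GS Agt Loc P M) (A : Set Agt) (φ : SForm Agt P) :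
    Set Loc →o Set Loc :=
  ⟨fun y => OrderHom.lfp (innerGF S A φ y),
   fun _ _ h => OrderHom.lfp.monotone (fun _ =>
      Set.union_subset_union (le_refl _)
        (Set.inter_subset_inter (le_refl _) (S.cpre_mono A h)))⟩

/-- the inner map `x ↦ CPre(A,x) ∩ (⟦φ⟧ ∪ CPre(A,y))`, as a monotone map. -/
def innerFG (S : GS Agt Loc P M) (A : Set Agt) (φ : SForm Agt P) (y : Set Loc) :
    Set Loc →o Set Loc :=
  ⟨fun x => S.CPre A x ∩ (SatSet S φ ∪ S.CPre A y),
   fun _ _ h => Set.inter_subset_inter (S.cpre_mono A h) (le_refl _)⟩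

/-- the outer map `y ↦ ν x. (CPre(A,x) ∩ (⟦φ⟧ ∪ CPre(A,y)))`. -/
def outerFG (S : GS Agt Loc P M) (A : Set Agt) (φ : SForm Agt P) :
    Set Loc →o Set Loc :=
  ⟨fun y => OrderHom.gfp (innerFG S A φ y),
   fun _ _ h => OrderHom.gfp.monotone (fun _ =>
      Set.inter_subset_inter (le_refl _)
        (Set.union_subset_union (le_refl _) (S.cpre_mono A h)))⟩

/-- the fixpoint characterizations of `⟨A⟩GF φ` and `⟨A⟩FG φ`, for a generic
game structure. -/
def GFFGFixpointClaim (S : GS Agt Loc P M) (A : Set Agt) (φ : SForm Agt P) : Prop :=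
  S.SatGF A φ = OrderHom.gfp (outerGF S A φ) ∧
  S.SatFG A φ = OrderHom.lfp (outerFG S A φ)

end FixpointDefs

section Aux

variable {Agt Loc P M : Type}

lemma hist_succ (ρ : ℕ → Loc) (n : ℕ) :
    GS.hist ρ (n + 1) = GS.hist ρ n ++ [ρ n] := by
  simp only [GS.hist, List.ofFn_succ', List.concat_eq_append, Fin.coe_castSucc, Fin.val_last]

lemma hist_congr {ρ σ : ℕ → Loc} {n : ℕ} (h : ∀ j < n, ρ j = σ j) :
    GS.hist ρ n = GS.hist σ n := by
  unfold GS.hist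
  exact congrArg List.ofFn (funext fun j => h j j.isLt)

lemma mem_cpre {S : GS Agt Loc P M} {A : Set Agt} {T : Set Loc} {ℓ : Loc} :
    ℓ ∈ S.CPre A T ↔ ∃ mA : Agt → M,
      (∀ a ∈ A, mA a ∈ S.mov ℓ a) ∧ S.Next ℓ A mA ⊆ T := Iff.rfl

lemma exists_traj (stepf : List Loc → Loc → Set Loc) (Inv : Loc → Prop)
    (R : Loc → Loc → Prop)
    (hst : ∀ h l, Inv l → ∃ l', l' ∈ stepf h l ∧ Inv l' ∧ R l l')
    {ℓ : Loc} (h0 : Inv ℓ) :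
    ∃ ρ : ℕ → Loc, ρ 0 = ℓ ∧ (∀ i, ρ (i + 1) ∈ stepf (GS.hist ρ i) (ρ i)) ∧
      (∀ i, Inv (ρ i)) ∧ ∀ i, R (ρ i) (ρ (i + 1)) := by
  classical
  have nxt : ∀ (h : List Loc) (l : Loc), Inv l →
      {l' // l' ∈ stepf h l ∧ Inv l' ∧ R l l'} := fun h l hl =>
    ⟨(hst h l hl).choose, (hst h l hl).choose_spec⟩
  let aux : ℕ → {p : List Loc × Loc // Inv p.2} := fun n =>
    Nat.rec ⟨([], ℓ), h0⟩
      (fun _ p => ⟨(p.1.1 ++ [p.1.2], (nxt p.1.1 p.1.2 p.2).1),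
        (nxt p.1.1 p.1.2 p.2).2.2.1⟩) n
  have hh : ∀ n, (aux n).1.1 = GS.hist (fun n => (aux n).1.2) n := by
    intro n
    induction n with
    | zero => rfl
    | succ n ih =>
      show (aux n).1.1 ++ [(aux n).1.2] = _
      rw [hist_succ, ← ih]
  refine ⟨fun n => (aux n).1.2, rfl, ?_, fun i => (aux i).2,
    fun i => (nxt (aux i).1.1 (aux i).1.2 (aux i).2).2.2.2⟩
  intro i
  show (aux (i+1)).1.2 ∈ _
  rw [← hh i]
  exact (nxt (aux i).1.1 (aux i).1.2 (aux i).2).2.1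

lemma iterate_le_lfp (f : Set Loc →o Set Loc) : ∀ n, (⇑f)^[n] ∅ ⊆ OrderHom.lfp f
  | 0 => by simp
  | n+1 => by
    calc (⇑f)^[n+1] ∅ = f ((⇑f)^[n] ∅) := Function.iterate_succ_apply' _ _ _
    _ ⊆ f (OrderHom.lfp f) := f.mono (iterate_le_lfp f n)
    _ = OrderHom.lfp f := f.map_lfp

lemma gfp_le_iterate (f : Set Loc →o Set Loc) : ∀ n, OrderHom.gfp f ⊆ (⇑f)^[n] Set.univ
  | 0 => by simp
  | n+1 => by
    calc OrderHom.gfp f = f (OrderHom.gfp f) := f.map_gfp.symm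
    _ ⊆ f ((⇑f)^[n] Set.univ) := f.mono (gfp_le_iterate f n)
    _ = (⇑f)^[n+1] Set.univ := (Function.iterate_succ_apply' _ _ _).symm

lemma monotone_stab [Finite Loc] (u : ℕ → Set Loc) (hu : Monotone u) :
    ∃ N, u (N + 1) = u N := by
  obtain ⟨a, b, hab, he⟩ := Finite.exists_ne_map_eq_of_infinite u
  rcases hab.lt_or_gt with h | h
  · exact ⟨a, le_antisymm (he ▸ hu h) (hu (Nat.le_succ a))⟩
  · exact ⟨b, le_antisymm (he ▸ hu h) (hu (Nat.le_succ b))⟩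

lemma iterate_mono_empty (f : Set Loc →o Set Loc) :
    Monotone fun n => (⇑f)^[n] (∅ : Set Loc) := by
  apply monotone_nat_of_le_succ
  intro n
  induction n with
  | zero => simp
  | succ n ih =>
    calc (⇑f)^[n+1] ∅ = f ((⇑f)^[n] ∅) := Function.iterate_succ_apply' _ _ _
    _ ⊆ f ((⇑f)^[n+1] ∅) := f.mono ih
    _ = (⇑f)^[n+2] ∅ := (Function.iterate_succ_apply' _ _ _).symm

lemma iterate_anti_univ (f : Set Loc →o Set Loc) :
    Antitone fun n => (⇑f)^[n] (Set.univ : Set Loc) := by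
  apply antitone_nat_of_succ_le
  intro n
  induction n with
  | zero => simp
  | succ n ih =>
    calc (⇑f)^[n+2] Set.univ = f ((⇑f)^[n+1] Set.univ) := Function.iterate_succ_apply' _ _ _
    _ ⊆ f ((⇑f)^[n] Set.univ) := f.mono ih
    _ = (⇑f)^[n+1] Set.univ := (Function.iterate_succ_apply' _ _ _).symm

lemma lfp_mem_iff [Finite Loc] (f : Set Loc →o Set Loc) (l : Loc) :
    l ∈ OrderHom.lfp f ↔ ∃ n, l ∈ (⇑f)^[n] ∅ := by
  constructor
  · intro hl
    obtain ⟨N, hN⟩ := monotone_stab _ (iterate_mono_empty f)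
    have h2 : f ((⇑f)^[N] ∅) = (⇑f)^[N] ∅ := by
      rw [← Function.iterate_succ_apply' (⇑f) N ∅]; exact hN
    exact ⟨N, f.lfp_le h2.le hl⟩
  · rintro ⟨n, hn⟩; exact iterate_le_lfp f n hn

lemma gfp_mem_iff [Finite Loc] (f : Set Loc →o Set Loc) (l : Loc) :
    l ∈ OrderHom.gfp f ↔ ∀ n, l ∈ (⇑f)^[n] Set.univ := by
  constructor
  · intro hl n; exact gfp_le_iterate f n hl
  · intro h
    obtain ⟨N, hN⟩ := monotone_stab (fun n => ((⇑f)^[n] Set.univ)ᶜ)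
      (fun a b hab => compl_le_compl (iterate_anti_univ f hab))
    have hN' : (⇑f)^[N+1] Set.univ = (⇑f)^[N] Set.univ := compl_injective hN
    have h2 : f ((⇑f)^[N] Set.univ) = (⇑f)^[N] Set.univ := by
      rw [← Function.iterate_succ_apply' (⇑f) N Set.univ]; exact hN'
    exact f.le_gfp h2.ge (h N)

end Aux
section Shift

variable {Agt Loc P M : Type}

lemma shiftGF {S : GS Agt Loc P M} {A : Set Agt} {φ : SForm Agt P}
    {F : GS.Strat Agt Loc M} {ℓ : Loc} {ρ : ℕ → Loc}
    (hFv : S.StratValid A F) (hρ : S.Out A ℓ F ρ)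
    (hwin : ∀ σ, S.Out A ℓ F σ → ∀ N, ∃ i, N ≤ i ∧ SSat S φ (σ i))
    (i : ℕ) {ℓ' : Loc}
    (hm : ℓ' ∈ S.Next (ρ i) A (F (GS.hist ρ i) (ρ i))) :
    ℓ' ∈ S.SatGF A φ := by
  classical
  refine ⟨fun h l => F (GS.hist ρ (i + 1) ++ h) l, fun h l a ha => hFv _ _ a ha, ?_⟩
  intro σ hσ N
  set τ : ℕ → Loc := fun j => if j ≤ i then ρ j else σ (j - (i + 1)) with hτdef
  have hτρ : ∀ j, j ≤ i → τ j = ρ j := fun j hj => if_pos hj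
  have hτσ : ∀ k, τ (i + 1 + k) = σ k := by
    intro k
    have : ¬ (i + 1 + k ≤ i) := by omega
    simp only [hτdef, if_neg this]
    congr 1
    omega
  have histA : ∀ j, j ≤ i + 1 → GS.hist τ j = GS.hist ρ j := by
    intro j hj
    exact hist_congr fun k hk => hτρ k (by omega)
  have hist0 : GS.hist σ 0 = [] := by simp [GS.hist]
  have histB : ∀ k, GS.hist τ (i + 1 + k) = GS.hist ρ (i + 1) ++ GS.hist σ k := by
    intro k
    induction k with
    | zero => rw [hist0, List.append_nil]; exact histA (i + 1) le_rfl
    | succ k ih =>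
      have h1 : i + 1 + (k + 1) = (i + 1 + k) + 1 := by omega
      rw [h1, hist_succ, ih, hτσ k, hist_succ σ k, List.append_assoc]
  have hτ : S.Out A ℓ F τ := by
    constructor
    · rw [hτρ 0 (Nat.zero_le i)]; exact hρ.1
    · intro j
      rcases Nat.lt_or_ge j i with hj | hj
      · rw [hτρ j hj.le, hτρ (j + 1) hj, histA j (by omega)]
        exact hρ.2 j
      · rcases Nat.eq_or_lt_of_le hj with hj' | hj'
        · have h1 : τ (j + 1) = σ 0 := by
            have h2 := hτσ 0
            rw [show i + 1 + 0 = j + 1 by omega] at h2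
            exact h2
          rw [h1, hσ.1, hτρ j (by omega), histA j (by omega), ← hj']
          exact hm
        · obtain ⟨k, rfl⟩ : ∃ k, j = i + 1 + k := ⟨j - (i + 1), by omega⟩
          have h1 : i + 1 + k + 1 = i + 1 + (k + 1) := by omega
          rw [h1, hτσ (k + 1), hτσ k, histB k]
          exact hσ.2 k
  obtain ⟨i', hi', hsat⟩ := hwin τ hτ (N + (i + 1))
  refine ⟨i' - (i + 1), by omega, ?_⟩
  have h2 : i' = i + 1 + (i' - (i + 1)) := by omega
  have h3 := hτσ (i' - (i + 1))
  rw [← h2] at h3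
  rwa [h3] at hsat

end Shift
section MainGF

variable {Agt Loc P M : Type}

lemma satGF_subset_gfp (S : GS Agt Loc P M) (A : Set Agt) (φ : SForm Agt P) :
    S.SatGF A φ ⊆ OrderHom.gfp (outerGF S A φ) := by
  have key : S.SatGF A φ ≤ (outerGF S A φ) (S.SatGF A φ) := by
    intro ℓ hℓ
    obtain ⟨F, hFv, hwin⟩ := hℓ
    show ℓ ∈ OrderHom.lfp (innerGF S A φ (S.SatGF A φ))
    by_contra hW
    set W := OrderHom.lfp (innerGF S A φ (S.SatGF A φ)) with hWdef
    have hfix : S.CPre A W ∪ (SatSet S φ ∩ S.CPre A (S.SatGF A φ)) = W :=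
      (innerGF S A φ (S.SatGF A φ)).map_lfp
    obtain ⟨ρ, hρ0, hρs, hInv, -⟩ := exists_traj
      (fun h l => S.Next l A (F h l)) (fun l => l ∉ W) (fun _ _ => True)
      (fun h l hl => by
        have hnc : l ∉ S.CPre A W := fun hc => hl (by rw [← hfix]; exact Or.inl hc)
        have hns : ¬ S.Next l A (F h l) ⊆ W :=
          fun hsub => hnc ⟨F h l, fun a ha => hFv h l a ha, hsub⟩
        obtain ⟨l', hl'1, hl'2⟩ := Set.not_subset.mp hns
        exact ⟨l', hl'1, hl'2, trivial⟩) hW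
    have hout : S.Out A ℓ F ρ := ⟨hρ0, hρs⟩
    obtain ⟨i, -, hsat⟩ := hwin ρ hout 0
    have hc : ρ i ∈ S.CPre A (S.SatGF A φ) :=
      ⟨F (GS.hist ρ i) (ρ i), fun a ha => hFv _ _ a ha,
        fun l' hl' => shiftGF hFv hout hwin i hl'⟩
    exact hInv i (by rw [← hfix]; exact Or.inr ⟨hsat, hc⟩)
  exact (outerGF S A φ).le_gfp key

end MainGF
lemma gfp_subset_satGF {Agt Loc P M : Type} [Finite Loc] (S : GS Agt Loc P M)
    (hmov : ∀ ℓ a, (S.mov ℓ a).Nonempty)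
    (A : Set Agt) (φ : SForm Agt P) :
    OrderHom.gfp (outerGF S A φ) ⊆ S.SatGF A φ := by
  classical
  set Y := OrderHom.gfp (outerGF S A φ) with hYdef
  have hYl : OrderHom.lfp (innerGF S A φ Y) = Y := (outerGF S A φ).map_gfp
  set g : Set Loc → Set Loc := ⇑(innerGF S A φ Y) with hg
  set rk : Loc → ℕ := fun l => sInf {n | l ∈ g^[n] ∅} with hrk
  set Fs : GS.Strat Agt Loc M := fun _ l =>
    if h1 : l ∈ SatSet S φ ∩ S.CPre A Y then (mem_cpre.mp h1.2).choose
    else if h2 : l ∈ S.CPre A (g^[rk l - 1] ∅) then (mem_cpre.mp h2).choose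
    else fun a => (hmov l a).some with hFs
  intro ℓ hℓ
  refine ⟨Fs, ?_, ?_⟩
  · intro h l a ha
    rw [hFs]
    dsimp only
    split_ifs with h1 h2
    · exact (Exists.choose_spec (mem_cpre.mp h1.2)).1 a ha
    · exact (Exists.choose_spec (mem_cpre.mp h2)).1 a ha
    · exact (hmov l a).some_mem
  · intro ρ hρ N
    have key : ∀ i, ρ i ∈ Y →
        ρ (i+1) ∈ Y ∧ (ρ i ∈ SatSet S φ ∩ S.CPre A Y ∨ rk (ρ (i+1)) < rk (ρ i)) := by
      intro i hi
      have hn := hρ.2 i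
      rw [hFs] at hn
      dsimp only at hn
      have hne : ∃ n, ρ i ∈ g^[n] ∅ := (lfp_mem_iff _ _).mp (by rw [hYl]; exact hi)
      have hmem : ρ i ∈ g^[rk (ρ i)] ∅ := Nat.sInf_mem hne
      have hpos : rk (ρ i) ≠ 0 := by
        intro h0
        rw [h0] at hmem
        simp at hmem
      obtain ⟨n, hn'⟩ := Nat.exists_eq_succ_of_ne_zero hpos
      have hstage : ρ i ∈ S.CPre A (g^[n] ∅) ∪ (SatSet S φ ∩ S.CPre A Y) := by
        have h3 : ρ i ∈ g (g^[n] ∅) := by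
          rw [hg, ← Function.iterate_succ_apply' (⇑(innerGF S A φ Y)) n ∅, ← hn']
          exact hmem
        exact h3
      split_ifs at hn with h1 h2
      · exact ⟨(Exists.choose_spec (mem_cpre.mp h1.2)).2 hn, Or.inl h1⟩
      · have hmem' : ρ (i+1) ∈ g^[rk (ρ i) - 1] ∅ :=
          (Exists.choose_spec (mem_cpre.mp h2)).2 hn
        refine ⟨by rw [← hYl]; exact iterate_le_lfp _ _ hmem', Or.inr ?_⟩
        have h4 : rk (ρ (i+1)) ≤ rk (ρ i) - 1 := Nat.sInf_le hmem'
        omega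
      · exfalso
        have h2' : ρ i ∈ S.CPre A (g^[rk (ρ i) - 1] ∅) := by
          rcases hstage with h | h
          · rw [hn']; simpa using h
          · exact absurd h h1
        exact h2 h2'
    have inv : ∀ i, ρ i ∈ Y := by
      intro i
      induction i with
      | zero => rw [hρ.1]; exact hℓ
      | succ i ih => exact (key i ih).1
    have find : ∀ r i, rk (ρ i) ≤ r → ∃ j, i ≤ j ∧ ρ j ∈ SatSet S φ ∩ S.CPre A Y := by
      intro r
      induction r with
      | zero =>
        intro i hri
        rcases (key i (inv i)).2 with h | h
        · exact ⟨i, le_rfl, h⟩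
        · omega
      | succ r ih =>
        intro i hri
        rcases (key i (inv i)).2 with h | h
        · exact ⟨i, le_rfl, h⟩
        · obtain ⟨j, hj, hjT⟩ := ih (i+1) (by omega)
          exact ⟨j, by omega, hjT⟩
    obtain ⟨j, hj1, hj2⟩ := find (rk (ρ N)) N le_rfl
    exact ⟨j, hj1, hj2.1⟩
lemma lfp_subset_satFG {Agt Loc P M : Type} [Finite Loc] (S : GS Agt Loc P M)
    (hmov : ∀ ℓ a, (S.mov ℓ a).Nonempty)
    (A : Set Agt) (φ : SForm Agt P) :
    OrderHom.lfp (outerFG S A φ) ⊆ S.SatFG A φ := by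
  classical
  set zz : ℕ → Set Loc := fun k => (⇑(outerFG S A φ))^[k] ∅ with hzz
  set lvl : Loc → ℕ := fun l => sInf {k | l ∈ zz k} with hlvl
  have zfix : ∀ k, S.CPre A (zz (k+1)) ∩ (SatSet S φ ∪ S.CPre A (zz k)) = zz (k+1) := by
    intro k
    have h1 : (outerFG S A φ) (zz k) = zz (k+1) := by
      rw [hzz]
      exact (Function.iterate_succ_apply' _ _ _).symm
    have h2 := (innerFG S A φ (zz k)).map_gfp
    rw [show OrderHom.gfp (innerFG S A φ (zz k)) = zz (k+1) from h1] at h2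
    exact h2
  set Fs : GS.Strat Agt Loc M := fun _ l =>
    if h1 : l ∈ SatSet S φ ∩ S.CPre A (zz (lvl l)) then (mem_cpre.mp h1.2).choose
    else if h2 : l ∈ S.CPre A (zz (lvl l - 1)) then (mem_cpre.mp h2).choose
    else fun a => (hmov l a).some with hFs
  intro ℓ hℓ
  refine ⟨Fs, ?_, ?_⟩
  · intro h l a ha
    rw [hFs]
    dsimp only
    split_ifs with h1 h2
    · exact (Exists.choose_spec (mem_cpre.mp h1.2)).1 a ha
    · exact (Exists.choose_spec (mem_cpre.mp h2)).1 a ha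
    · exact (hmov l a).some_mem
  · intro ρ hρ
    have key : ∀ i, ρ i ∈ OrderHom.lfp (outerFG S A φ) →
        ρ (i+1) ∈ OrderHom.lfp (outerFG S A φ) ∧ lvl (ρ (i+1)) ≤ lvl (ρ i) ∧
          (SSat S φ (ρ i) ∨ lvl (ρ (i+1)) < lvl (ρ i)) := by
      intro i hi
      have hn := hρ.2 i
      rw [hFs] at hn
      dsimp only at hn
      have hne : ∃ k, ρ i ∈ zz k := (lfp_mem_iff _ _).mp hi
      have hmem : ρ i ∈ zz (lvl (ρ i)) := Nat.sInf_mem hne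
      have hpos : lvl (ρ i) ≠ 0 := by
        intro h0
        rw [h0] at hmem
        simp [hzz] at hmem
      obtain ⟨n, hn'⟩ := Nat.exists_eq_succ_of_ne_zero hpos
      rw [Nat.succ_eq_add_one] at hn'
      have hmem' : ρ i ∈ S.CPre A (zz (n+1)) ∩ (SatSet S φ ∪ S.CPre A (zz n)) := by
        rw [zfix n, ← hn']
        exact hmem
      split_ifs at hn with h1 h2
      · have hsucc : ρ (i+1) ∈ zz (lvl (ρ i)) :=
          (Exists.choose_spec (mem_cpre.mp h1.2)).2 hn
        exact ⟨iterate_le_lfp _ _ hsucc, Nat.sInf_le hsucc, Or.inl h1.1⟩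
      · have hsucc : ρ (i+1) ∈ zz (lvl (ρ i) - 1) :=
          (Exists.choose_spec (mem_cpre.mp h2)).2 hn
        have hlt : lvl (ρ (i+1)) ≤ lvl (ρ i) - 1 := Nat.sInf_le hsucc
        exact ⟨iterate_le_lfp _ _ hsucc, by omega, Or.inr (by omega)⟩
      · exfalso
        rcases hmem'.2 with h | h
        · exact h1 ⟨h, by rw [hn']; exact hmem'.1⟩
        · exact h2 (by rw [hn']; simpa using h)
    have inv : ∀ i, ρ i ∈ OrderHom.lfp (outerFG S A φ) := by
      intro i
      induction i with
      | zero => rw [hρ.1]; exact hℓ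
      | succ i ih => exact (key i ih).1
    have mono : ∀ i k, lvl (ρ (i + k)) ≤ lvl (ρ i) := by
      intro i k
      induction k with
      | zero => exact le_rfl
      | succ k ih =>
        have := (key (i + k) (inv (i + k))).2.1
        rw [show i + (k+1) = (i + k) + 1 by omega]
        omega
    obtain ⟨N, hN⟩ : ∃ N, lvl (ρ N) = sInf (Set.range fun i => lvl (ρ i)) :=
      Nat.sInf_mem (Set.range_nonempty fun i => lvl (ρ i))
    refine ⟨N, ?_⟩
    intro i hi
    by_contra hφn
    have hk := (key i (inv i)).2.2
    have hlt : lvl (ρ (i+1)) < lvl (ρ i) := by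
      rcases hk with h | h
      · exact absurd h hφn
      · exact h
    have h5 : lvl (ρ i) ≤ lvl (ρ N) := by
      have := mono N (i - N)
      rwa [show N + (i - N) = i by omega] at this
    have h6 : sInf (Set.range fun j => lvl (ρ j)) ≤ lvl (ρ (i+1)) :=
      Nat.sInf_le ⟨i+1, rfl⟩
    omega

lemma satFG_subset_lfp {Agt Loc P M : Type} [Finite Loc] (S : GS Agt Loc P M)
    (A : Set Agt) (φ : SForm Agt P) :
    S.SatFG A φ ⊆ OrderHom.lfp (outerFG S A φ) := by
  classical
  intro ℓ hℓ
  obtain ⟨F, hFv, hwin⟩ := hℓ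
  by_contra hZ
  set Z := OrderHom.lfp (outerFG S A φ) with hZdef
  have hZfix : OrderHom.gfp (innerFG S A φ Z) = Z := (outerFG S A φ).map_lfp
  set g : Set Loc → Set Loc := ⇑(innerFG S A φ Z) with hg
  set crk : Loc → ℕ := fun l => sInf {n | l ∉ g^[n] Set.univ} with hcrk
  have hZsub : ∀ n, Z ⊆ g^[n] Set.univ := by
    intro n
    rw [← hZfix]
    exact gfp_le_iterate _ n
  have hne : ∀ l, l ∉ Z → {n | l ∉ g^[n] Set.univ}.Nonempty := by
    intro l hl
    by_contra h
    apply hl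
    rw [← hZfix]
    refine (gfp_mem_iff _ l).mpr fun n => ?_
    by_contra hn
    exact h ⟨n, hn⟩
  obtain ⟨ρ, hρ0, hρs, hInv, hR⟩ := exists_traj
    (fun h l => S.Next l A (F h l)) (fun l => l ∉ Z)
    (fun l l' => crk l' < crk l ∨ ¬ SSat S φ l)
    (fun h l hl => by
      have hcm : l ∉ g^[crk l] Set.univ := Nat.sInf_mem (hne l hl)
      have hpos : crk l ≠ 0 := by
        intro h0
        rw [h0] at hcm
        simp at hcm
      obtain ⟨n, hn'⟩ := Nat.exists_eq_succ_of_ne_zero hpos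
      rw [Nat.succ_eq_add_one] at hn'
      have hsplit : l ∉ S.CPre A (g^[n] Set.univ) ∩ (SatSet S φ ∪ S.CPre A Z) := by
        intro hc
        rw [hn', Function.iterate_succ_apply'] at hcm
        exact hcm hc
      by_cases hca : l ∈ S.CPre A (g^[n] Set.univ)
      · have hB : l ∉ SatSet S φ ∪ S.CPre A Z := fun hB => hsplit ⟨hca, hB⟩
        have hnc : l ∉ S.CPre A Z := fun hc => hB (Or.inr hc)
        obtain ⟨l', h1, h2⟩ := Set.not_subset.mp
          (fun hsub => hnc ⟨F h l, fun a ha => hFv h l a ha, hsub⟩)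
        exact ⟨l', h1, h2, Or.inr fun hφ => hB (Or.inl hφ)⟩
      · obtain ⟨l', h1, h2⟩ := Set.not_subset.mp
          (fun hsub => hca ⟨F h l, fun a ha => hFv h l a ha, hsub⟩)
        refine ⟨l', h1, fun hZ' => h2 (hZsub n hZ'), Or.inl ?_⟩
        have h3 : crk l' ≤ n := Nat.sInf_le h2
        omega) hZ
  obtain ⟨N, hN⟩ := hwin ρ ⟨hρ0, hρs⟩
  have desc : ∀ k, crk (ρ (N + k)) + k ≤ crk (ρ N) := by
    intro k
    induction k with
    | zero => simp
    | succ k ih =>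
      rcases hR (N + k) with hlt | hnφ
      · rw [show N + (k+1) = (N + k) + 1 by omega]
        omega
      · exact absurd (hN (N + k) (by omega)) hnφ
  have := desc (crk (ρ N) + 1)
  omega
theorem generic_claim {Agt Loc P M : Type} [Finite Loc] (S : GS Agt Loc P M)
    (hmov : ∀ ℓ a, (S.mov ℓ a).Nonempty)
    (A : Set Agt) (φ : SForm Agt P) : GFFGFixpointClaim S A φ :=
  ⟨Set.Subset.antisymm (satGF_subset_gfp S A φ) (gfp_subset_satGF S hmov A φ),
   Set.Subset.antisymm (satFG_subset_lfp S A φ) (lfp_subset_satFG S hmov A φ)⟩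
theorem GF_FG_fixpoint_characterization
    (Agt P : Type) [Fintype Agt] [Fintype P] :
    (∀ (Loc : Type) [Fintype Loc] (G : CGS Agt Loc P), G.WellFormed →
      ∀ (A : Set Agt) (φ : SForm Agt P), GFFGFixpointClaim G.toGS A φ) ∧
    (∀ (Loc : Type) [Fintype Loc] (T : ATS Agt Loc P), T.WellFormed →
      ∀ (A : Set Agt) (φ : SForm Agt P), GFFGFixpointClaim T.toGS A φ) := by
  constructor
  · intro Loc _ G hwf A φ
    exact generic_claim G.toGS
      (fun ℓ a => Finset.coe_nonempty.mpr (hwf ℓ a)) A φ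
  · intro Loc _ T hwf A φ
    exact generic_claim T.toGS (fun ℓ a => hwf.1 ℓ a) A φ
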